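/- There do not exist a probability space Ω and random variables A₀, A_{π/2}, A_π, B₀, C₀, C_{π/2}, D₀, D_{π/2} on Ω, each taking only the values 1 and −1, such that for all φ₁ ∈ {0, π/2, π} and all φ₃, φ₄ ∈ {0, π/2}, E[A_{φ₁} · B₀ · C_{φ₃} · D_{φ₄}] = −cos(φ₁ − φ₃ − φ₄). Equivalently, a family of ±1-valued observables A_{φ₁}, B_{φ₂}, C_{φ₃}, D_{φ₄} satisfying the GHZ correlation E[A_{φ₁}B_{φ₂}C_{φ₃}D_{φ₄}] = −cos(φ₁ + φ₂ − φ₃ − φ₄) admits no joint probability distribution of the eight listed random variables. -/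

import Mathlib

/-!
Each product `A_{φ₁} B₀ C_{φ₃} D_{φ₄}` is `±1`-valued, so a correlation of `±1` pins it down
almost surely. For the settings `(π/2, π/2, 0)` and `(π/2, 0, π/2)` the product is `-1`; multiplying
the two, `A_{π/2}² B₀² = 1` leaves `C₀ C_{π/2} D₀ D_{π/2} = 1`. The settings `(π, π/2, π/2)` and
`(π, 0, 0)` give `-1` and `+1`, whose product says `C₀ C_{π/2} D₀ D_{π/2} = -1`.
-/

open MeasureTheory Real

section
variable {Ω : Type*} [MeasurableSpace Ω] {μ : Measure Ω} [IsProbabilityMeasure μ] {f : Ω → ℝ}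

lemma ae_eq_one_of_ae_le_one_of_integral_eq_one (hf : ∀ᵐ ω ∂μ, f ω ≤ 1)
    (h : ∫ ω, f ω ∂μ = 1) : ∀ᵐ ω ∂μ, f ω = 1 := by
  have hint : Integrable f μ := .of_integral_ne_zero (by simp [h])
  refine (integral_eq_iff_of_ae_le hint (integrable_const 1) hf).1 ?_
  simpa using h

lemma ae_eq_of_abs_le_one_of_integral_eq {ε : ℝ} (hf : ∀ᵐ ω ∂μ, |f ω| ≤ 1) (hε : |ε| = 1)
    (h : ∫ ω, f ω ∂μ = ε) : ∀ᵐ ω ∂μ, f ω = ε := by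
  have hεε : ε * ε = 1 := by rw [← abs_mul_self, abs_mul, hε, one_mul]
  have hεf : ∀ᵐ ω ∂μ, ε * f ω = 1 := by
    refine ae_eq_one_of_ae_le_one_of_integral_eq_one ?_ (by rw [integral_const_mul, h, hεε])
    filter_upwards [hf] with ω hω
    calc ε * f ω ≤ |ε * f ω| := le_abs_self _
      _ ≤ 1 := by rw [abs_mul, hε, one_mul]; exact hω
  filter_upwards [hεf] with ω hω
  calc f ω = ε * (ε * f ω) := by rw [← mul_assoc, hεε, one_mul]
    _ = ε := by rw [hω, mul_one]

end

lemma ghz_sign_products_inconsistent {R : Type*} [CommRing R] [NeZero (2 : R)]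
    {a₁ a₂ b c₀ c₁ d₀ d₁ : R} (ha₁ : a₁ * a₁ = 1) (ha₂ : a₂ * a₂ = 1)
    (h₁ : a₁ * b * c₁ * d₀ = -1) (h₂ : a₁ * b * c₀ * d₁ = -1)
    (h₃ : a₂ * b * c₁ * d₁ = -1) (h₄ : a₂ * b * c₀ * d₀ = 1) : False := by
  refine two_ne_zero (α := R) ?_
  linear_combination (b ^ 2 * c₀ * c₁ * d₀ * d₁) * ha₁ - (b ^ 2 * c₀ * c₁ * d₀ * d₁) * ha₂
    - (a₁ * b * c₀ * d₁) * h₁ + h₂ + (a₂ * b * c₀ * d₀) * h₃ - h₄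

theorem ghz_no_joint_distribution
    {Ω : Type*} [MeasurableSpace Ω] (P : Measure Ω) [IsProbabilityMeasure P]
    (A : ℝ → Ω → ℝ) (B : ℝ → Ω → ℝ) (C : ℝ → Ω → ℝ) (D : ℝ → Ω → ℝ)
    (hAval : ∀ φ ∈ ({0, π / 2, π} : Set ℝ), ∀ ω, A φ ω = 1 ∨ A φ ω = -1)
    (hBval : ∀ ω, B 0 ω = 1 ∨ B 0 ω = -1)
    (hCval : ∀ φ ∈ ({0, π / 2} : Set ℝ), ∀ ω, C φ ω = 1 ∨ C φ ω = -1)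
    (hDval : ∀ φ ∈ ({0, π / 2} : Set ℝ), ∀ ω, D φ ω = 1 ∨ D φ ω = -1)
    (hmom : ∀ φ₁ ∈ ({0, π / 2, π} : Set ℝ), ∀ φ₃ ∈ ({0, π / 2} : Set ℝ),
      ∀ φ₄ ∈ ({0, π / 2} : Set ℝ),
      ∫ ω, A φ₁ ω * B 0 ω * C φ₃ ω * D φ₄ ω ∂P = -Real.cos (φ₁ - φ₃ - φ₄)) :
    False := by
  have habs {x : ℝ} (hx : x = 1 ∨ x = -1) : |x| = 1 := (abs_eq zero_le_one).2 hx
  have hsign : ∀ φ₁ ∈ ({0, π / 2, π} : Set ℝ), ∀ φ₃ ∈ ({0, π / 2} : Set ℝ),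
      ∀ φ₄ ∈ ({0, π / 2} : Set ℝ), |cos (φ₁ - φ₃ - φ₄)| = 1 →
      ∀ᵐ ω ∂P, A φ₁ ω * B 0 ω * C φ₃ ω * D φ₄ ω = -cos (φ₁ - φ₃ - φ₄) := by
    intro φ₁ h₁ φ₃ h₃ φ₄ h₄ hcos
    refine ae_eq_of_abs_le_one_of_integral_eq (.of_forall fun ω ↦ le_of_eq ?_)
      (by rwa [abs_neg]) (hmom φ₁ h₁ φ₃ h₃ φ₄ h₄)
    simp only [abs_mul, habs (hAval φ₁ h₁ ω), habs (hBval ω), habs (hCval φ₃ h₃ ω),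
      habs (hDval φ₄ h₄ ω), mul_one]
  have h₁ := hsign (π / 2) (by simp) (π / 2) (by simp) 0 (by simp) (by simp)
  have h₂ := hsign (π / 2) (by simp) 0 (by simp) (π / 2) (by simp) (by simp)
  have h₃ := hsign π (by simp) (π / 2) (by simp) (π / 2) (by simp) (by simp [sub_half])
  have h₄ := hsign π (by simp) 0 (by simp) 0 (by simp) (by simp)
  obtain ⟨ω, h₁, h₂, h₃, h₄⟩ := (h₁.and (h₂.and (h₃.and h₄))).exists
  simp only [sub_self, sub_zero, sub_half, cos_zero, cos_pi, neg_neg] at h₁ h₂ h₃ h₄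
  exact ghz_sign_products_inconsistent (mul_self_eq_one_iff.2 (hAval (π / 2) (by simp) ω))
    (mul_self_eq_one_iff.2 (hAval π (by simp) ω)) h₁ h₂ h₃ h₄
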